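/- Under the hypotheses of the bi-umbilical Frenet system — n ≥ 3, D ⊂ ℝ² open connected, smooth maps z, X, Y, N, e₁, …, e_{n−2} : D → ℝ^{n+1} with (X, Y, e₁, …, e_{n−2}, N) orthonormal at every point, z_u = √E·X, z_v = √G·Y (E, G > 0 smooth), and smooth γ₁, γ₂ and constants ν ≠ 0, λᵢ = cᵢ satisfying X_u = √E(γ₁Y + Σᵢcᵢeᵢ + νN), Y_u = −√E·γ₁X, (eᵢ)_u = −√E·cᵢX, N_u = −√E·νX, X_v = √G·γ₂Y, Y_v = √G(−γ₂X + Σᵢcᵢeᵢ + νN), (eᵢ)_v = −√G·cᵢY, N_v = −√G·νY — assume c² := Σᵢcᵢ² > 0 and set b := (1/c)Σᵢcᵢeᵢ. Then: (i) the vector field b̄ := (ν·b − c·N)/√(c² + ν²) is constant on D; (ii) with N̄ := (c·b + ν·N)/√(c² + ν²), the map p₀ := z + N̄/√(c² + ν²) is constant on D; consequently |z(u,v) − p₀| = 1/√(c² + ν²) and (z(u,v) − p₀)·b̄ = 0 for all (u,v) ∈ D, so z lies on a two-dimensional sphere of radius 1/√(c² + ν²) contained in a three-dimensional affine subspace orthogonal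 to the constant vector b̄. -/

import Mathlib

open Real Set
open scoped RealInnerProductSpace

noncomputable section

/-- Partial derivative in the first (`u`) direction. -/
def pu {α : Type*} [NormedAddCommGroup α] [NormedSpace ℝ α]
    (f : ℝ × ℝ → α) (p : ℝ × ℝ) : α :=
  fderiv ℝ f p (1, 0)

/-- Partial derivative in the second (`v`) direction. -/
def pv {α : Type*} [NormedAddCommGroup α] [NormedSpace ℝ α]
    (f : ℝ × ℝ → α) (p : ℝ × ℝ) : α :=
  fderiv ℝ f p (0, 1)

/-- The family `(X, Y, e₁, …, e_{n-2}, N)` is an orthonormal system in `ℝ^{n+1}`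
at every point of `D`. -/
def OrthFrame (n : ℕ) (D : Set (ℝ × ℝ))
    (X Y N : ℝ × ℝ → EuclideanSpace ℝ (Fin (n + 1)))
    (e : Fin (n - 2) → ℝ × ℝ → EuclideanSpace ℝ (Fin (n + 1))) : Prop :=
  ∀ p ∈ D,
    ⟪X p, X p⟫ = 1 ∧ ⟪Y p, Y p⟫ = 1 ∧ ⟪N p, N p⟫ = 1 ∧
    ⟪X p, Y p⟫ = 0 ∧ ⟪X p, N p⟫ = 0 ∧ ⟪Y p, N p⟫ = 0 ∧
    (∀ i, ⟪e i p, e i p⟫ = 1 ∧ ⟪X p, e i p⟫ = 0 ∧ ⟪Y p, e i p⟫ = 0 ∧ ⟪N p, e i p⟫ = 0) ∧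
    (∀ i j, i ≠ j → ⟪e i p, e j p⟫ = 0)

/- ### Auxiliary lemmas -/

lemma fderiv_eq_zero_of_pu_pv {α : Type*} [NormedAddCommGroup α] [NormedSpace ℝ α]
    {f : ℝ × ℝ → α} {p : ℝ × ℝ} (h1 : pu f p = 0) (h2 : pv f p = 0) :
    fderiv ℝ f p = 0 := by
  apply ContinuousLinearMap.ext
  rintro ⟨a, b⟩
  have hw : ((a, b) : ℝ × ℝ) = a • ((1:ℝ), (0:ℝ)) + b • ((0:ℝ), (1:ℝ)) := by
    simp [Prod.ext_iff]
  rw [hw, map_add, map_smul, map_smul]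
  unfold pu at h1; unfold pv at h2
  rw [h1, h2]; simp

lemma const_on_of_pderiv_zero {α : Type*} [NormedAddCommGroup α] [NormedSpace ℝ α]
    {D : Set (ℝ × ℝ)} (hD : IsOpen D) (hconn : IsPreconnected D) {f : ℝ × ℝ → α}
    (hdiff : ∀ p ∈ D, DifferentiableAt ℝ f p)
    (h1 : ∀ p ∈ D, pu f p = 0) (h2 : ∀ p ∈ D, pv f p = 0) :
    ∀ p ∈ D, ∀ q ∈ D, f p = f q := by
  have hfd : ∀ p ∈ D, fderiv ℝ f p = 0 := fun p hp =>
    fderiv_eq_zero_of_pu_pv (h1 p hp) (h2 p hp)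
  have key : ∀ q ∈ D, ∃ r > 0, Metric.ball q r ⊆ D ∧ ∀ x ∈ Metric.ball q r, f x = f q := by
    intro q hq
    obtain ⟨r, hr, hball⟩ := Metric.isOpen_iff.1 hD q hq
    refine ⟨r, hr, hball, fun x hx => ?_⟩
    refine (convex_ball q r).is_const_of_fderivWithin_eq_zero
      (fun y hy => (hdiff y (hball hy)).differentiableWithinAt)
      (fun y hy => ?_) hx (Metric.mem_ball_self hr)
    rw [fderivWithin_of_isOpen Metric.isOpen_ball hy]
    exact hfd y (hball hy)
  intro p hp q hq
  by_contra hne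
  have hU : IsOpen {x | x ∈ D ∧ f x = f p} := by
    rw [isOpen_iff_forall_mem_open]
    rintro x ⟨hxD, hxf⟩
    obtain ⟨r, hr, hsub, hconst⟩ := key x hxD
    exact ⟨Metric.ball x r, fun y hy => ⟨hsub hy, (hconst y hy).trans hxf⟩,
      Metric.isOpen_ball, Metric.mem_ball_self hr⟩
  have hV : IsOpen {x | x ∈ D ∧ f x ≠ f p} := by
    rw [isOpen_iff_forall_mem_open]
    rintro x ⟨hxD, hxf⟩
    obtain ⟨r, hr, hsub, hconst⟩ := key x hxD
    exact ⟨Metric.ball x r, fun y hy => ⟨hsub hy, (hconst y hy).symm ▸ hxf⟩,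
      Metric.isOpen_ball, Metric.mem_ball_self hr⟩
  obtain ⟨x, hxD, ⟨-, hx1⟩, -, hx2⟩ := hconn _ _ hU hV
    (fun x hx => by by_cases h : f x = f p <;> [exact Or.inl ⟨hx, h⟩; exact Or.inr ⟨hx, h⟩])
    ⟨p, hp, hp, rfl⟩ ⟨q, hq, hq, fun h => hne h.symm⟩
  exact hx2 hx1

lemma pd_comb2 {α : Type*} [NormedAddCommGroup α] [NormedSpace ℝ α]
    {f g : ℝ × ℝ → α} {p : ℝ × ℝ} (hf : DifferentiableAt ℝ f p)
    (hg : DifferentiableAt ℝ g p) (a b : ℝ) (w : ℝ × ℝ) :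
    fderiv ℝ (fun x => a • f x + b • g x) p w
      = a • fderiv ℝ f p w + b • fderiv ℝ g p w := by
  rw [fderiv_fun_add (hf.fun_const_smul a) (hg.fun_const_smul b), fderiv_fun_const_smul hf,
    fderiv_fun_const_smul hg]
  rfl

lemma pd_comb3 {α : Type*} [NormedAddCommGroup α] [NormedSpace ℝ α]
    {f g h : ℝ × ℝ → α} {p : ℝ × ℝ} (hf : DifferentiableAt ℝ f p)
    (hg : DifferentiableAt ℝ g p) (hh : DifferentiableAt ℝ h p) (a b : ℝ) (w : ℝ × ℝ) :
    fderiv ℝ (fun x => f x + a • g x + b • h x) p w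
      = fderiv ℝ f p w + a • fderiv ℝ g p w + b • fderiv ℝ h p w := by
  rw [fderiv_fun_add (hf.fun_add (hg.fun_const_smul a)) (hh.fun_const_smul b),
    fderiv_fun_add hf (hg.fun_const_smul a), fderiv_fun_const_smul hg, fderiv_fun_const_smul hh]
  rfl

lemma pd_sum_smul {α : Type*} [NormedAddCommGroup α] [NormedSpace ℝ α]
    {ι : Type*} [Fintype ι] {e : ι → ℝ × ℝ → α} {p : ℝ × ℝ}
    (hd : ∀ i, DifferentiableAt ℝ (e i) p) (c : ι → ℝ) (w : ℝ × ℝ) :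
    fderiv ℝ (fun x => ∑ i, c i • e i x) p w = ∑ i, c i • fderiv ℝ (e i) p w := by
  rw [fderiv_fun_sum (fun i _ => (hd i).fun_const_smul (c i)), ContinuousLinearMap.sum_apply]
  exact Finset.sum_congr rfl fun i _ => by rw [fderiv_fun_const_smul (hd i)]; rfl

set_option maxHeartbeats 1000000 in
/-- Case `∑ cᵢ² > 0` of the classification of integral surfaces of the distribution `Δ` of a
bi-umbilical hypersurface of type number two: the surface `z` lies on a two-dimensional
sphere of radius `1/√(c² + ν²)` in a three-dimensional affine subspace orthogonal to the
constant vector `b̄`. -/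
theorem biumbilical_case_c_positive
    (n : ℕ) (hn : 3 ≤ n)
    (D : Set (ℝ × ℝ)) (hD : IsOpen D) (hconn : IsConnected D)
    (z X Y N : ℝ × ℝ → EuclideanSpace ℝ (Fin (n + 1)))
    (e : Fin (n - 2) → ℝ × ℝ → EuclideanSpace ℝ (Fin (n + 1)))
    (Ec Gc γ₁ γ₂ : ℝ × ℝ → ℝ) (ν : ℝ) (c : Fin (n - 2) → ℝ)
    (hz : ContDiffOn ℝ (⊤ : ℕ∞) z D) (hX : ContDiffOn ℝ (⊤ : ℕ∞) X D) (hY : ContDiffOn ℝ (⊤ : ℕ∞) Y D)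
    (hN : ContDiffOn ℝ (⊤ : ℕ∞) N D) (he : ∀ i, ContDiffOn ℝ (⊤ : ℕ∞) (e i) D)
    (hEc : ContDiffOn ℝ (⊤ : ℕ∞) Ec D) (hGc : ContDiffOn ℝ (⊤ : ℕ∞) Gc D)
    (hγ₁ : ContDiffOn ℝ (⊤ : ℕ∞) γ₁ D) (hγ₂ : ContDiffOn ℝ (⊤ : ℕ∞) γ₂ D)
    (hEpos : ∀ p ∈ D, 0 < Ec p) (hGpos : ∀ p ∈ D, 0 < Gc p)
    (hνne : ν ≠ 0)
    (hc : 0 < ∑ i, c i ^ 2)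
    (horth : OrthFrame n D X Y N e)
    (hzu : ∀ p ∈ D, pu z p = Real.sqrt (Ec p) • X p)
    (hzv : ∀ p ∈ D, pv z p = Real.sqrt (Gc p) • Y p)
    (hXu : ∀ p ∈ D, pu X p =
      Real.sqrt (Ec p) • (γ₁ p • Y p + (∑ i, c i • e i p) + ν • N p))
    (hYu : ∀ p ∈ D, pu Y p = -(Real.sqrt (Ec p) * γ₁ p) • X p)
    (heu : ∀ p ∈ D, ∀ i, pu (e i) p = -(Real.sqrt (Ec p) * c i) • X p)
    (hNu : ∀ p ∈ D, pu N p = -(Real.sqrt (Ec p) * ν) • X p)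
    (hXv : ∀ p ∈ D, pv X p = (Real.sqrt (Gc p) * γ₂ p) • Y p)
    (hYv : ∀ p ∈ D, pv Y p =
      Real.sqrt (Gc p) • ((-(γ₂ p)) • X p + (∑ i, c i • e i p) + ν • N p))
    (hev : ∀ p ∈ D, ∀ i, pv (e i) p = -(Real.sqrt (Gc p) * c i) • Y p)
    (hNv : ∀ p ∈ D, pv N p = -(Real.sqrt (Gc p) * ν) • Y p) :
    -- with `c = √(∑ cᵢ²)`, `b = (1/c) ∑ cᵢ eᵢ`, `b̄ = (ν b - c N)/√(c² + ν²)`,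
    -- `N̄ = (c b + ν N)/√(c² + ν²)` and `p₀ = z + N̄/√(c² + ν²)`:
    (let cn : ℝ := Real.sqrt (∑ i, c i ^ 2)
     let s : ℝ := Real.sqrt ((∑ i, c i ^ 2) + ν ^ 2)
     let b : ℝ × ℝ → EuclideanSpace ℝ (Fin (n + 1)) := fun p => cn⁻¹ • ∑ i, c i • e i p
     let bbar : ℝ × ℝ → EuclideanSpace ℝ (Fin (n + 1)) :=
       fun p => s⁻¹ • (ν • b p - cn • N p)
     let Nbar : ℝ × ℝ → EuclideanSpace ℝ (Fin (n + 1)) :=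
       fun p => s⁻¹ • (cn • b p + ν • N p)
     let cent : ℝ × ℝ → EuclideanSpace ℝ (Fin (n + 1)) := fun p => z p + s⁻¹ • Nbar p
     -- (i): `b̄` is constant on `D`
     (∀ p ∈ D, ∀ q ∈ D, bbar p = bbar q) ∧
     -- (ii): the center `p₀` is constant on `D`
     (∀ p ∈ D, ∀ q ∈ D, cent p = cent q) ∧
     -- `z` stays at distance `1/√(c² + ν²)` from the center
     (∀ p ∈ D, ∀ q ∈ D, ‖z p - cent q‖ = 1 / s) ∧
     -- and `z - p₀` is orthogonal to the constant vector `b̄`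
     (∀ p ∈ D, ∀ q ∈ D, ⟪z p - cent q, bbar q⟫ = 0)) := by
  classical
  intro cn s b bbar Nbar cent

  set K : ℝ := ∑ i, c i ^ 2 with hKdef
  -- basic numeric facts
  have hcnpos : 0 < cn := Real.sqrt_pos.2 hc
  have hcnne : cn ≠ 0 := hcnpos.ne'
  have hcn2 : cn * cn = K := Real.mul_self_sqrt hc.le
  have hKν : 0 < K + ν ^ 2 := by positivity
  have hspos : 0 < s := Real.sqrt_pos.2 hKν
  have hsne : s ≠ 0 := hspos.ne'
  have hs2 : s * s = K + ν ^ 2 := Real.mul_self_sqrt hKν.le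
  -- differentiability
  have dz : ∀ p ∈ D, DifferentiableAt ℝ z p := fun p hp =>
    (hz.contDiffAt (hD.mem_nhds hp)).differentiableAt (by simp)
  have dX : ∀ p ∈ D, DifferentiableAt ℝ X p := fun p hp =>
    (hX.contDiffAt (hD.mem_nhds hp)).differentiableAt (by simp)
  have dY : ∀ p ∈ D, DifferentiableAt ℝ Y p := fun p hp =>
    (hY.contDiffAt (hD.mem_nhds hp)).differentiableAt (by simp)
  have dN : ∀ p ∈ D, DifferentiableAt ℝ N p := fun p hp =>
    (hN.contDiffAt (hD.mem_nhds hp)).differentiableAt (by simp)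
  have de : ∀ i, ∀ p ∈ D, DifferentiableAt ℝ (e i) p := fun i p hp =>
    ((he i).contDiffAt (hD.mem_nhds hp)).differentiableAt (by simp)
  set S : ℝ × ℝ → EuclideanSpace ℝ (Fin (n + 1)) := fun x => ∑ i, c i • e i x with hSdef
  have dS : ∀ p ∈ D, DifferentiableAt ℝ S p := fun p hp =>
    DifferentiableAt.fun_sum fun i _ => (de i p hp).fun_const_smul (c i)
  -- derivatives of S
  have hSu : ∀ p ∈ D, pu S p = (-(Real.sqrt (Ec p)) * K) • X p := by
    intro p hp
    have h1 : pu S p = ∑ i, c i • pu (e i) p :=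
      pd_sum_smul (fun i => de i p hp) c (1, 0)
    rw [h1, Finset.sum_congr rfl (fun i _ => by rw [heu p hp i, smul_smul]),
      ← Finset.sum_smul]
    congr 1
    rw [Finset.sum_congr rfl
      (fun i _ => (by ring : c i * -(Real.sqrt (Ec p) * c i)
        = -(Real.sqrt (Ec p)) * c i ^ 2)), ← Finset.mul_sum]
  have hSv : ∀ p ∈ D, pv S p = (-(Real.sqrt (Gc p)) * K) • Y p := by
    intro p hp
    have h1 : pv S p = ∑ i, c i • pv (e i) p :=
      pd_sum_smul (fun i => de i p hp) c (0, 1)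
    rw [h1, Finset.sum_congr rfl (fun i _ => by rw [hev p hp i, smul_smul]),
      ← Finset.sum_smul]
    congr 1
    rw [Finset.sum_congr rfl
      (fun i _ => (by ring : c i * -(Real.sqrt (Gc p) * c i)
        = -(Real.sqrt (Gc p)) * c i ^ 2)), ← Finset.mul_sum]
  -- rewriting bbar and cent in linear-combination form
  have hbbar_eq : ∀ x, bbar x = (s⁻¹ * ν * cn⁻¹) • S x + (-(s⁻¹ * cn)) • N x := by
    intro x
    show s⁻¹ • (ν • (cn⁻¹ • S x) - cn • N x) = _
    module
  have hNbar_eq : ∀ x, Nbar x = s⁻¹ • (S x + ν • N x) := by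
    intro x
    show s⁻¹ • (cn • (cn⁻¹ • S x) + ν • N x) = _
    rw [smul_smul, mul_inv_cancel₀ hcnne, one_smul]
  have hcent_eq : ∀ x, cent x = z x + (s⁻¹ * s⁻¹) • S x + (s⁻¹ * s⁻¹ * ν) • N x := by
    intro x
    show z x + s⁻¹ • Nbar x = _
    rw [hNbar_eq x]
    module
  -- (i)  bbar is constant
  have hbbar_const : ∀ p ∈ D, ∀ q ∈ D, bbar p = bbar q := by
    have hzero : ∀ w : ℝ × ℝ, ∀ p ∈ D,
        (s⁻¹ * ν * cn⁻¹) • fderiv ℝ S p w + (-(s⁻¹ * cn)) • fderiv ℝ N p w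
          = (s⁻¹ * ν * cn⁻¹) • fderiv ℝ S p w + (-(s⁻¹ * cn)) • fderiv ℝ N p w :=
      fun _ _ _ => rfl
    have key := const_on_of_pderiv_zero hD hconn.isPreconnected
      (f := fun x => (s⁻¹ * ν * cn⁻¹) • S x + (-(s⁻¹ * cn)) • N x)
      (fun p hp => ((dS p hp).fun_const_smul _).fun_add ((dN p hp).fun_const_smul _))
      (fun p hp => by
        have h := pd_comb2 (dS p hp) (dN p hp) (s⁻¹ * ν * cn⁻¹) (-(s⁻¹ * cn)) (1, 0)
        show fderiv ℝ _ p (1, 0) = 0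
        rw [h]
        show (s⁻¹ * ν * cn⁻¹) • pu S p + (-(s⁻¹ * cn)) • pu N p = 0
        rw [hSu p hp, hNu p hp, smul_smul, smul_smul, ← add_smul,
          show s⁻¹ * ν * cn⁻¹ * (-(Real.sqrt (Ec p)) * K)
              + -(s⁻¹ * cn) * -(Real.sqrt (Ec p) * ν) = 0 by
            rw [← hcn2]; field_simp; ring]
        exact zero_smul ℝ _)
      (fun p hp => by
        have h := pd_comb2 (dS p hp) (dN p hp) (s⁻¹ * ν * cn⁻¹) (-(s⁻¹ * cn)) (0, 1)
        show fderiv ℝ _ p (0, 1) = 0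
        rw [h]
        show (s⁻¹ * ν * cn⁻¹) • pv S p + (-(s⁻¹ * cn)) • pv N p = 0
        rw [hSv p hp, hNv p hp, smul_smul, smul_smul, ← add_smul,
          show s⁻¹ * ν * cn⁻¹ * (-(Real.sqrt (Gc p)) * K)
              + -(s⁻¹ * cn) * -(Real.sqrt (Gc p) * ν) = 0 by
            rw [← hcn2]; field_simp; ring]
        exact zero_smul ℝ _)
    intro p hp q hq
    rw [hbbar_eq p, hbbar_eq q]
    exact key p hp q hq
  -- (ii)  cent is constant
  have hcent_const : ∀ p ∈ D, ∀ q ∈ D, cent p = cent q := by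
    have hsinv : s⁻¹ * s⁻¹ = (K + ν ^ 2)⁻¹ := by rw [← mul_inv, hs2]
    have key := const_on_of_pderiv_zero hD hconn.isPreconnected
      (f := fun x => z x + (s⁻¹ * s⁻¹) • S x + (s⁻¹ * s⁻¹ * ν) • N x)
      (fun p hp => ((dz p hp).fun_add ((dS p hp).fun_const_smul _)).fun_add ((dN p hp).fun_const_smul _))
      (fun p hp => by
        have h := pd_comb3 (dz p hp) (dS p hp) (dN p hp) (s⁻¹ * s⁻¹) (s⁻¹ * s⁻¹ * ν) (1, 0)
        show fderiv ℝ _ p (1, 0) = 0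
        rw [h]
        show pu z p + (s⁻¹ * s⁻¹) • pu S p + (s⁻¹ * s⁻¹ * ν) • pu N p = 0
        rw [hzu p hp, hSu p hp, hNu p hp, smul_smul, smul_smul, ← add_smul, ← add_smul,
          show Real.sqrt (Ec p) + s⁻¹ * s⁻¹ * (-(Real.sqrt (Ec p)) * K)
              + s⁻¹ * s⁻¹ * ν * -(Real.sqrt (Ec p) * ν) = 0 from by
            rw [hsinv]; field_simp; ring]
        exact zero_smul ℝ _)
      (fun p hp => by
        have h := pd_comb3 (dz p hp) (dS p hp) (dN p hp) (s⁻¹ * s⁻¹) (s⁻¹ * s⁻¹ * ν) (0, 1)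
        show fderiv ℝ _ p (0, 1) = 0
        rw [h]
        show pv z p + (s⁻¹ * s⁻¹) • pv S p + (s⁻¹ * s⁻¹ * ν) • pv N p = 0
        rw [hzv p hp, hSv p hp, hNv p hp, smul_smul, smul_smul, ← add_smul, ← add_smul,
          show Real.sqrt (Gc p) + s⁻¹ * s⁻¹ * (-(Real.sqrt (Gc p)) * K)
              + s⁻¹ * s⁻¹ * ν * -(Real.sqrt (Gc p) * ν) = 0 from by
            rw [hsinv]; field_simp; ring]
        exact zero_smul ℝ _)
    intro p hp q hq
    rw [hcent_eq p, hcent_eq q]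
    have := key p hp q hq
    simpa using this
  -- inner-product computations
  have hSS : ∀ p ∈ D, ⟪S p, S p⟫ = K := by
    intro p hp
    obtain ⟨-, -, -, -, -, -, hdiag, hoff⟩ := horth p hp
    show ⟪∑ i, c i • e i p, ∑ j, c j • e j p⟫ = K
    rw [sum_inner]
    rw [Finset.sum_congr rfl (fun i _ => by
      rw [real_inner_smul_left, inner_sum,
        Finset.sum_congr rfl (fun j _ => by rw [real_inner_smul_right]),
        Finset.sum_eq_single i (fun j _ hji => by rw [hoff i j (Ne.symm hji), mul_zero])
          (fun h => absurd (Finset.mem_univ i) h),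
        (hdiag i).1, mul_one])]
    rw [hKdef]
    exact Finset.sum_congr rfl fun i _ => (sq (c i)).symm
  have hSN : ∀ p ∈ D, ⟪S p, N p⟫ = 0 := by
    intro p hp
    obtain ⟨-, -, -, -, -, -, hdiag, -⟩ := horth p hp
    show ⟪∑ i, c i • e i p, N p⟫ = 0
    rw [sum_inner]
    refine Finset.sum_eq_zero fun i _ => ?_
    rw [real_inner_smul_left, real_inner_comm, (hdiag i).2.2.2, mul_zero]
  have hNN : ∀ p ∈ D, ⟪N p, N p⟫ = 1 := fun p hp => (horth p hp).2.2.1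
  have hNbarNbar : ∀ p ∈ D, ⟪Nbar p, Nbar p⟫ = 1 := by
    intro p hp
    have hNS : ⟪N p, S p⟫ = 0 := by rw [real_inner_comm]; exact hSN p hp
    rw [hNbar_eq p]
    simp only [inner_add_left, inner_add_right, real_inner_smul_left,
      real_inner_smul_right, hSS p hp, hSN p hp, hNS, hNN p hp, mul_zero, mul_one,
      add_zero, zero_add]
    field_simp
    linear_combination -hs2
  have hNbar_norm : ∀ p ∈ D, ‖Nbar p‖ = 1 := by
    intro p hp
    have h := hNbarNbar p hp
    rw [real_inner_self_eq_norm_sq] at h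
    nlinarith [norm_nonneg (Nbar p)]
  have hzc : ∀ p, z p - cent p = -(s⁻¹ • Nbar p) := by
    intro p
    show z p - (z p + s⁻¹ • Nbar p) = _
    abel
  -- (iii)  distance from center
  have hdist : ∀ p ∈ D, ∀ q ∈ D, ‖z p - cent q‖ = 1 / s := by
    intro p hp q hq
    rw [show cent q = cent p from hcent_const q hq p hp, hzc p, norm_neg, norm_smul,
      hNbar_norm p hp, Real.norm_eq_abs, abs_of_pos (inv_pos.2 hspos), mul_one, one_div]
  -- (iv)  orthogonality
  have hNbarbbar : ∀ p ∈ D, ⟪Nbar p, bbar p⟫ = 0 := by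
    intro p hp
    have hNS : ⟪N p, S p⟫ = 0 := by rw [real_inner_comm]; exact hSN p hp
    rw [hNbar_eq p, hbbar_eq p]
    simp only [inner_add_left, inner_add_right, real_inner_smul_left,
      real_inner_smul_right, hSS p hp, hSN p hp, hNS, hNN p hp, mul_zero, mul_one,
      add_zero, zero_add]
    have hinv : cn⁻¹ * cn = 1 := inv_mul_cancel₀ hcnne
    rw [← hcn2]
    linear_combination (s⁻¹ * ν * s⁻¹ * cn) * hinv
  have horthog : ∀ p ∈ D, ∀ q ∈ D, ⟪z p - cent q, bbar q⟫ = 0 := by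
    intro p hp q hq
    rw [show cent q = cent p from hcent_const q hq p hp,
      show bbar q = bbar p from hbbar_const q hq p hp, hzc p, inner_neg_left,
      real_inner_smul_left, hNbarbbar p hp, mul_zero, neg_zero]
  exact ⟨hbbar_const, hcent_const, hdist, horthog⟩
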